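/- Assume k₁² ≠ k₂². Then for every x ≠ y in ℝ³ and all constant vectors ν_x, ν_y ∈ ℝ³, T(∂_x,ν_x)[(ν_y·∇_y)E₁₂(x,y)] − γ ν_x (ν_y·∇_y)E₂₂(x,y) = (γ k_p²/(k₁²−k₂²)) ν_x (ν_y·∇_y)(γ_{k₁}−γ_{k₂})(x,y) − (2μγ/((k₁²−k₂²)(λ+2μ))) M(∂_x,ν_x)[(ν_y·∇_y)∇_x(γ_{k₁}−γ_{k₂})(x,y)], where (ν_y·∇_y) is the directional derivative in y and T, M act in x. -/

import Mathlib

noncomputable section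

open scoped BigOperators

/-- Three-dimensional Euclidean space. -/
abbrev V3 : Type := EuclideanSpace ℝ (Fin 3)

/-- Partial derivative in the `i`-th coordinate direction. -/
def pd (i : Fin 3) (f : V3 → ℂ) : V3 → ℂ :=
  fun x => fderiv ℝ f x (EuclideanSpace.single i (1 : ℝ))

/-- Laplacian. -/
def lap (f : V3 → ℂ) : V3 → ℂ := fun x => ∑ i, pd i (pd i f) x

/-- Directional derivative `ν·∇` along the constant vector `ν`. -/
def dirD (ν : Fin 3 → ℝ) (f : V3 → ℂ) : V3 → ℂ :=
  fun x => ∑ i, (ν i : ℂ) * pd i f x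

/-- Divergence of a vector field. -/
def vdiv (v : Fin 3 → V3 → ℂ) : V3 → ℂ := fun x => ∑ i, pd i (v i) x

/-- Levi–Civita symbol on `Fin 3`. -/
def eps (i j k : Fin 3) : ℝ :=
  if (i, j, k) = (0, 1, 2) ∨ (i, j, k) = (1, 2, 0) ∨ (i, j, k) = (2, 0, 1) then 1
  else if (i, j, k) = (0, 2, 1) ∨ (i, j, k) = (2, 1, 0) ∨ (i, j, k) = (1, 0, 2) then -1
  else 0

/-- Curl of a vector field: `(curl v)_i = Σ_{l,m} ε_{ilm} ∂_l v_m`. -/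
def curl (v : Fin 3 → V3 → ℂ) : Fin 3 → V3 → ℂ :=
  fun i x => ∑ l, ∑ m, (eps i l m : ℂ) * pd l (v m) x

/-- Cross product of a constant real vector with a complex vector. -/
def crossR (ν : Fin 3 → ℝ) (w : Fin 3 → ℂ) : Fin 3 → ℂ :=
  fun i => ∑ l, ∑ m, (eps i l m : ℂ) * (ν l : ℂ) * w m

/-- Günter derivative `M(∂,ν)` acting on a vector field,
with entries `m^{ij}(∂,ν) = ν^j ∂_i − ν^i ∂_j`. -/
def gunterM (ν : Fin 3 → ℝ) (v : Fin 3 → V3 → ℂ) : Fin 3 → V3 → ℂ :=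
  fun i x => ∑ j, ((ν j : ℂ) * pd i (v j) x - (ν i : ℂ) * pd j (v j) x)

/-- Traction operator `T(∂,ν)v = 2μ ∂_ν v + λ ν (∇·v) + μ ν × curl v`. -/
def traction (lam μ : ℝ) (ν : Fin 3 → ℝ) (v : Fin 3 → V3 → ℂ) : Fin 3 → V3 → ℂ :=
  fun i x => 2 * (μ : ℂ) * dirD ν (v i) x + (lam : ℂ) * (ν i : ℂ) * vdiv v x
    + (μ : ℂ) * crossR ν (fun m => curl v m x) i

/-- Helmholtz fundamental solution `γ_k(x,y) = exp(i k |x−y|)/(4π|x−y|)`. -/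
def gammaK (k : ℂ) (x y : V3) : ℂ :=
  Complex.exp (Complex.I * k * (‖x - y‖ : ℂ)) / ((4 * Real.pi * ‖x - y‖ : ℝ) : ℂ)

/-- Kupradze tensor entry `E(x,y)_{ij}`:
`E = (1/μ)γ_{k_s} I + (1/(ρω²)) ∇_x∇_x^⊤[γ_{k_s} − γ_{k_p}]`. -/
def kupE (μ ρ ω : ℝ) (ks kp : ℂ) (i j : Fin 3) (x y : V3) : ℂ :=
  (1 / (μ : ℂ)) * gammaK ks x y * (if i = j then 1 else 0)
    + (1 / ((ρ : ℂ) * (ω : ℂ) ^ 2)) *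
      pd i (pd j (fun w => gammaK ks w y - gammaK kp w y)) x

/-- Thermoelastic fundamental-solution block `E₁₁`, entry `(i,j)`. -/
def E11 (μ ρ ω : ℝ) (ks kp k1 k2 : ℂ) (i j : Fin 3) (x y : V3) : ℂ :=
  (1 / (μ : ℂ)) * gammaK ks x y * (if i = j then 1 else 0)
    + (1 / ((ρ : ℂ) * (ω : ℂ) ^ 2)) *
      pd i (pd j (fun w => gammaK ks w y - gammaK k1 w y)) x
    - (1 / ((ρ : ℂ) * (ω : ℂ) ^ 2)) * ((kp ^ 2 - k1 ^ 2) / (k1 ^ 2 - k2 ^ 2)) *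
      pd i (pd j (fun w => gammaK k1 w y - gammaK k2 w y)) x

/-- Thermoelastic fundamental-solution block `E₁₂`, component `j`. -/
def E12 (lam μ gam : ℝ) (k1 k2 : ℂ) (j : Fin 3) (x y : V3) : ℂ :=
  -((gam : ℂ) / ((k1 ^ 2 - k2 ^ 2) * ((lam : ℂ) + 2 * (μ : ℂ)))) *
    pd j (fun w => gammaK k1 w y - gammaK k2 w y) x

/-- Thermoelastic fundamental-solution block `E₂₁`, component `j`. -/
def E21 (lam μ ω η : ℝ) (k1 k2 : ℂ) (j : Fin 3) (x y : V3) : ℂ :=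
  (Complex.I * (ω : ℂ) * (η : ℂ) / ((k1 ^ 2 - k2 ^ 2) * ((lam : ℂ) + 2 * (μ : ℂ)))) *
    pd j (fun w => gammaK k1 w y - gammaK k2 w y) x

/-- Thermoelastic fundamental-solution block `E₂₂`. -/
def E22 (kp k1 k2 : ℂ) (x y : V3) : ℂ :=
  -(1 / (k1 ^ 2 - k2 ^ 2)) *
    ((kp ^ 2 - k1 ^ 2) * gammaK k1 x y - (kp ^ 2 - k2 ^ 2) * gammaK k2 x y)


def phf (k : ℂ) (t : ℝ) : ℂ := Complex.exp (Complex.I * k * t) / (4 * Real.pi * t)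
def psf (k : ℂ) (t : ℝ) : ℂ :=
  Complex.exp (Complex.I * k * t) * (Complex.I * k * t - 1) / (4 * Real.pi * t ^ 3)
def chf (k : ℂ) (t : ℝ) : ℂ :=
  Complex.exp (Complex.I * k * t) * (-(k^2) * t^2 - 3 * Complex.I * k * t + 3) / (4 * Real.pi * t ^ 5)
def xif (k : ℂ) (t : ℝ) : ℂ :=
  Complex.exp (Complex.I * k * t) * (-Complex.I * k^3 * t^3 + 6 * k^2 * t^2 + 15 * Complex.I * k * t - 15) / (4 * Real.pi * t ^ 7)

lemma hasDerivAt_ofReal' (t : ℝ) : HasDerivAt (fun s : ℝ => (s : ℂ)) 1 t := by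
  have h := Complex.ofRealCLM.hasDerivAt (x := t); simp at h ⊢; exact h

lemma hasDerivAt_cexp_Ik (k : ℂ) (t : ℝ) :
    HasDerivAt (fun s : ℝ => Complex.exp (Complex.I * k * s))
      (Complex.I * k * Complex.exp (Complex.I * k * t)) t := by
  have := ((hasDerivAt_ofReal' t).const_mul (Complex.I * k)).cexp
  simpa [mul_comm] using this

lemma pi_c_ne : (Real.pi : ℂ) ≠ 0 := by exact_mod_cast Real.pi_ne_zero

lemma hasDerivAt_phf (k : ℂ) {t : ℝ} (ht : t ≠ 0) :
    HasDerivAt (phf k) (t * psf k t) t := by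
  have htc : (t : ℂ) ≠ 0 := by exact_mod_cast ht
  have hden : HasDerivAt (fun s : ℝ => (4 * (Real.pi : ℂ) * s)) (4 * Real.pi) t := by
    simpa using (hasDerivAt_ofReal' t).const_mul (4 * (Real.pi : ℂ))
  have hd : (4 * (Real.pi : ℂ) * t) ≠ 0 := by simp [pi_c_ne, htc, Real.pi_ne_zero]
  have h := (hasDerivAt_cexp_Ik k t).div hden hd
  have heq : (Complex.I * k * Complex.exp (Complex.I * k * t) * (4 * (Real.pi:ℂ) * t)
      - Complex.exp (Complex.I * k * t) * (4 * Real.pi)) / (4 * (Real.pi:ℂ) * t) ^ 2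
      = t * psf k t := by
    rw [psf]; field_simp [htc, pi_c_ne]
  rw [heq] at h
  exact h

lemma hasDerivAt_psf (k : ℂ) {t : ℝ} (ht : t ≠ 0) :
    HasDerivAt (psf k) (t * chf k t) t := by
  have htc : (t : ℂ) ≠ 0 := by exact_mod_cast ht
  have hnum : HasDerivAt
      (fun s : ℝ => Complex.exp (Complex.I * k * s) * (Complex.I * k * s - 1))
      (Complex.I * k * Complex.exp (Complex.I * k * t) * (Complex.I * k * t - 1)
        + Complex.exp (Complex.I * k * t) * (Complex.I * k)) t := by
    exact (hasDerivAt_cexp_Ik k t).mul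
      (by simpa using ((hasDerivAt_ofReal' t).const_mul (Complex.I * k)).sub_const 1)
  have hden : HasDerivAt (fun s : ℝ => (4 * (Real.pi : ℂ) * (s:ℂ) ^ 3))
      (4 * Real.pi * (3 * (t:ℂ)^2)) t := by
    simpa [Complex.ofReal_pow, mul_assoc] using ((hasDerivAt_pow 3 t).ofReal_comp.const_mul (4 * (Real.pi : ℂ)))
  have hd : (4 * (Real.pi : ℂ) * (t:ℂ)^3) ≠ 0 := by simp [pi_c_ne, htc, Real.pi_ne_zero]
  have h := hnum.div hden hd
  have heq : ((Complex.I * k * Complex.exp (Complex.I * k * t) * (Complex.I * k * t - 1)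
        + Complex.exp (Complex.I * k * t) * (Complex.I * k)) * (4 * (Real.pi:ℂ) * (t:ℂ)^3)
      - Complex.exp (Complex.I * k * t) * (Complex.I * k * t - 1) * (4 * Real.pi * (3 * (t:ℂ)^2)))
        / (4 * (Real.pi:ℂ) * (t:ℂ)^3) ^ 2
      = t * chf k t := by
    rw [chf]; field_simp [htc, pi_c_ne]; ring_nf; simp only [Complex.I_sq]; ring
  rw [heq] at h
  exact h

lemma hasDerivAt_chf (k : ℂ) {t : ℝ} (ht : t ≠ 0) :
    HasDerivAt (chf k) (t * xif k t) t := by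
  have htc : (t : ℂ) ≠ 0 := by exact_mod_cast ht
  have hpoly : HasDerivAt (fun s : ℝ => (-(k^2) * (s:ℂ)^2 - 3 * Complex.I * k * s + 3))
      (-(k^2) * (2 * (t:ℂ)) - 3 * Complex.I * k) t := by
    have h1 : HasDerivAt (fun s : ℝ => (-(k^2) * (s:ℂ)^2)) (-(k^2) * (2 * (t:ℂ))) t := by
      have h := (hasDerivAt_pow 2 t).ofReal_comp.const_mul (-(k^2))
      simp only [Complex.ofReal_pow, Complex.ofReal_mul, Complex.ofReal_ofNat] at h
      refine h.congr_deriv ?_; push_cast; ring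
    have h2 : HasDerivAt (fun s : ℝ => (3 * Complex.I * k * (s:ℂ))) (3 * Complex.I * k) t := by
      simpa using (hasDerivAt_ofReal' t).const_mul (3 * Complex.I * k)
    simpa using (h1.sub h2).add_const 3
  have hnum : HasDerivAt
      (fun s : ℝ => Complex.exp (Complex.I * k * s) * (-(k^2) * (s:ℂ)^2 - 3 * Complex.I * k * s + 3))
      (Complex.I * k * Complex.exp (Complex.I * k * t) * (-(k^2) * (t:ℂ)^2 - 3 * Complex.I * k * t + 3)
        + Complex.exp (Complex.I * k * t) * (-(k^2) * (2 * (t:ℂ)) - 3 * Complex.I * k)) t :=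
    (hasDerivAt_cexp_Ik k t).mul hpoly
  have hden : HasDerivAt (fun s : ℝ => (4 * (Real.pi : ℂ) * (s:ℂ) ^ 5))
      (4 * Real.pi * (5 * (t:ℂ)^4)) t := by
    simpa [Complex.ofReal_pow, mul_assoc] using ((hasDerivAt_pow 5 t).ofReal_comp.const_mul (4 * (Real.pi : ℂ)))
  have hd : (4 * (Real.pi : ℂ) * (t:ℂ)^5) ≠ 0 := by simp [pi_c_ne, htc, Real.pi_ne_zero]
  have h := hnum.div hden hd
  have heq : ((Complex.I * k * Complex.exp (Complex.I * k * t) * (-(k^2) * (t:ℂ)^2 - 3 * Complex.I * k * t + 3)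
        + Complex.exp (Complex.I * k * t) * (-(k^2) * (2 * (t:ℂ)) - 3 * Complex.I * k)) * (4 * (Real.pi:ℂ) * (t:ℂ)^5)
      - Complex.exp (Complex.I * k * t) * (-(k^2) * (t:ℂ)^2 - 3 * Complex.I * k * t + 3) * (4 * Real.pi * (5 * (t:ℂ)^4)))
        / (4 * (Real.pi:ℂ) * (t:ℂ)^5) ^ 2
      = t * xif k t := by
    rw [xif]; field_simp [htc, pi_c_ne]; ring_nf; simp only [Complex.I_sq]; ring
  rw [heq] at h
  exact h

lemma H3f (k : ℂ) {t : ℝ} (ht : t ≠ 0) :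
    xif k t * (t:ℂ)^2 + 5 * chf k t = -(k^2) * psf k t := by
  have htc : (t : ℂ) ≠ 0 := by exact_mod_cast ht
  rw [xif, chf, psf]; field_simp [htc, pi_c_ne]; ring

section Aux
open Complex

lemma gammaK_eq_phf (k : ℂ) (x y : V3) : gammaK k x y = phf k ‖x - y‖ := by
  rw [gammaK, phf]; push_cast; ring_nf

lemma hasFDerivAt_norm3 {u : V3} (hu : u ≠ 0) :
    HasFDerivAt (fun w : V3 => ‖w‖) ((‖u‖⁻¹ : ℝ) • innerSL ℝ u) u := by
  have h1 : HasFDerivAt (fun w : V3 => ‖w‖ ^ 2) ((2:ℝ) • innerSL ℝ u) u := by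
    have := (hasFDerivAt_id u).norm_sq
    refine this.congr_fderiv (Eq.symm ?_)
    refine ContinuousLinearMap.ext fun v => ?_
    simp
  have h2 : HasDerivAt Real.sqrt (1 / (2 * Real.sqrt (‖u‖ ^ 2))) (‖u‖ ^ 2) :=
    Real.hasDerivAt_sqrt (ne_of_gt (pow_pos (norm_pos_iff.mpr hu) 2))
  have h3 := h2.comp_hasFDerivAt u h1
  have hfun : (Real.sqrt ∘ fun w : V3 => ‖w‖ ^ 2) = fun w : V3 => ‖w‖ := by
    funext w; simp [Real.sqrt_sq (norm_nonneg w)]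
  rw [hfun] at h3
  rw [Real.sqrt_sq (norm_nonneg u)] at h3
  have hne : ‖u‖ ≠ 0 := norm_ne_zero_iff.mpr hu
  have hsc : (1 / (2 * ‖u‖)) • ((2:ℝ) • innerSL ℝ u) = (‖u‖⁻¹ : ℝ) • innerSL ℝ u := by
    rw [smul_smul]; congr 1; field_simp
  rwa [hsc] at h3

def inC (v : V3) : V3 →L[ℝ] ℂ := Complex.ofRealCLM.comp (innerSL ℝ v)
def prC (j : Fin 3) : V3 →L[ℝ] ℂ := Complex.ofRealCLM.comp (EuclideanSpace.proj j)

@[simp] lemma inC_single (v : V3) (i : Fin 3) :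
    inC v (EuclideanSpace.single i (1:ℝ)) = ((v i : ℝ) : ℂ) := by
  simp [inC, EuclideanSpace.inner_single_right]

@[simp] lemma prC_single (j i : Fin 3) :
    prC j (EuclideanSpace.single i (1:ℝ)) = if j = i then 1 else 0 := by
  simp [prC, EuclideanSpace.single_apply, apply_ite (fun r : ℝ => (r : ℂ))]

lemma hasFDerivAt_radial (f h : ℝ → ℂ) (hf : ∀ t : ℝ, t ≠ 0 → HasDerivAt f (t * h t) t)
    {z x : V3} (hxz : x ≠ z) :
    HasFDerivAt (fun w : V3 => f ‖w - z‖) ((h ‖x - z‖) • inC (x - z)) x := by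
  have hu : x - z ≠ 0 := sub_ne_zero.mpr hxz
  have hnz : ‖x - z‖ ≠ 0 := norm_ne_zero_iff.mpr hu
  have hsub : HasFDerivAt (fun w : V3 => w - z) (ContinuousLinearMap.id ℝ V3) x :=
    (hasFDerivAt_id x).sub_const z
  have hn : HasFDerivAt (fun w : V3 => ‖w - z‖) ((‖x - z‖⁻¹ : ℝ) • innerSL ℝ (x - z)) x := by
    have h := (hasFDerivAt_norm3 hu).comp x hsub; simp at h ⊢; exact h
  have h3 := ((hf _ hnz).hasFDerivAt).comp x hn
  have heq : (f ∘ fun w : V3 => ‖w - z‖) = fun w : V3 => f ‖w - z‖ := rfl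
  rw [heq] at h3
  refine h3.congr_fderiv (Eq.symm ?_)
  refine ContinuousLinearMap.ext fun v => ?_
  have htc : ((‖x - z‖ : ℝ) : ℂ) ≠ 0 := by exact_mod_cast hnz
  simp [inC, ContinuousLinearMap.smul_apply, smul_eq_mul]
  field_simp [htc]
end Aux

section Aux2
open Complex

def F0 (k : ℂ) (z : V3) (w : V3) : ℂ := phf k ‖w - z‖
def F1 (k : ℂ) (z : V3) (j : Fin 3) (w : V3) : ℂ := psf k ‖w - z‖ * (((w - z) j : ℝ) : ℂ)
def F2 (k : ℂ) (z : V3) (j l : Fin 3) (w : V3) : ℂ :=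
  chf k ‖w - z‖ * (((w - z) j : ℝ) : ℂ) * (((w - z) l : ℝ) : ℂ)
    + (if j = l then psf k ‖w - z‖ else 0)

lemma hcoord (z : V3) (j : Fin 3) (x : V3) :
    HasFDerivAt (fun w : V3 => (((w - z) j : ℝ) : ℂ)) (prC j) x := by
  have heq : (fun w : V3 => (((w - z) j : ℝ) : ℂ)) = fun w : V3 => prC j w - prC j z := by
    funext w
    simp [prC]
  rw [heq]
  simpa using (prC j).hasFDerivAt.sub_const (prC j z)

lemma hF0 (k : ℂ) (z : V3) {x : V3} (hxz : x ≠ z) :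
    HasFDerivAt (F0 k z) ((psf k ‖x - z‖) • inC (x - z)) x :=
  hasFDerivAt_radial _ _ (fun _ ht => hasDerivAt_phf k ht) hxz

lemma hF1 (k : ℂ) (z : V3) (j : Fin 3) {x : V3} (hxz : x ≠ z) :
    HasFDerivAt (F1 k z j)
      ((psf k ‖x - z‖) • prC j
        + (chf k ‖x - z‖ * (((x - z) j : ℝ) : ℂ)) • inC (x - z)) x := by
  have h1 := hasFDerivAt_radial (psf k) (chf k) (fun _ ht => hasDerivAt_psf k ht) hxz
  have h2 := h1.mul (hcoord z j x)
  refine h2.congr_fderiv (Eq.symm ?_)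
  refine ContinuousLinearMap.ext fun v => ?_
  simp [ContinuousLinearMap.smul_apply, smul_eq_mul]
  ring

lemma hF2 (k : ℂ) (z : V3) (j l : Fin 3) {x : V3} (hxz : x ≠ z) :
    HasFDerivAt (F2 k z j l)
      ((chf k ‖x - z‖ * (((x - z) j : ℝ) : ℂ)) • prC l
        + (chf k ‖x - z‖ * (((x - z) l : ℝ) : ℂ)) • prC j
        + (xif k ‖x - z‖ * (((x - z) j : ℝ) : ℂ) * (((x - z) l : ℝ) : ℂ)
            + (if j = l then chf k ‖x - z‖ else 0)) • inC (x - z)) x := by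
  have h1 := hasFDerivAt_radial (chf k) (xif k) (fun _ ht => hasDerivAt_chf k ht) hxz
  have h2 := (h1.mul (hcoord z j x)).mul (hcoord z l x)
  by_cases hjl : j = l
  · subst hjl
    have h3 := hasFDerivAt_radial (psf k) (chf k) (fun _ ht => hasDerivAt_psf k ht) hxz
    have heqF : F2 k z j j = fun w : V3 =>
        chf k ‖w - z‖ * (((w - z) j : ℝ) : ℂ) * (((w - z) j : ℝ) : ℂ) + psf k ‖w - z‖ := by
      funext w; simp [F2]
    rw [heqF]
    have h4 := h2.add h3
    refine h4.congr_fderiv (Eq.symm ?_)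
    refine ContinuousLinearMap.ext fun v => ?_
    simp [ContinuousLinearMap.smul_apply, smul_eq_mul]
    ring
  · have heqF : F2 k z j l = fun w : V3 =>
        chf k ‖w - z‖ * (((w - z) j : ℝ) : ℂ) * (((w - z) l : ℝ) : ℂ) := by
      funext w; simp [F2, hjl]
    rw [heqF]
    refine h2.congr_fderiv (Eq.symm ?_)
    refine ContinuousLinearMap.ext fun v => ?_
    simp [ContinuousLinearMap.smul_apply, smul_eq_mul, hjl]
    ring

lemma pdF0 (k : ℂ) (z : V3) {x : V3} (hxz : x ≠ z) (i : Fin 3) :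
    pd i (F0 k z) x = F1 k z i x := by
  simp only [pd]
  rw [(hF0 k z hxz).fderiv]
  simp [F1, ContinuousLinearMap.smul_apply, smul_eq_mul]

lemma pdF1 (k : ℂ) (z : V3) (j : Fin 3) {x : V3} (hxz : x ≠ z) (i : Fin 3) :
    pd i (F1 k z j) x = F2 k z i j x := by
  simp only [pd]
  rw [(hF1 k z j hxz).fderiv]
  by_cases hij : i = j
  · subst hij; simp [F2, ContinuousLinearMap.smul_apply, smul_eq_mul]; ring
  · simp [F2, hij, Ne.symm hij, ContinuousLinearMap.smul_apply, smul_eq_mul]; ring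

lemma pdF2 (k : ℂ) (z : V3) (j l : Fin 3) {x : V3} (hxz : x ≠ z) (i : Fin 3) :
    pd i (F2 k z j l) x =
      xif k ‖x - z‖ * (((x - z) i : ℝ) : ℂ) * (((x - z) j : ℝ) : ℂ) * (((x - z) l : ℝ) : ℂ)
        + chf k ‖x - z‖ *
          ((if i = j then (((x - z) l : ℝ) : ℂ) else 0)
            + (if i = l then (((x - z) j : ℝ) : ℂ) else 0)
            + (if j = l then (((x - z) i : ℝ) : ℂ) else 0)) := by
  simp only [pd]
  rw [(hF2 k z j l hxz).fderiv]
  simp only [ContinuousLinearMap.add_apply, ContinuousLinearMap.smul_apply, inC_single,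
    prC_single, smul_eq_mul]
  by_cases hij : j = i <;> by_cases hil : l = i <;> by_cases hjl : j = l <;>
    simp_all [eq_comm] <;> ring
end Aux2

section Aux3
open Complex

lemma pd_of_hasFDerivAt {f : V3 → ℂ} {L : V3 →L[ℝ] ℂ} {x : V3}
    (h : HasFDerivAt f L x) (i : Fin 3) :
    pd i f x = L (EuclideanSpace.single i (1:ℝ)) := by
  simp only [pd]; rw [h.fderiv]

lemma pd_congr_nhds {f g : V3 → ℂ} {x : V3} (h : f =ᶠ[nhds x] g) (i : Fin 3) :
    pd i f x = pd i g x := by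
  simp only [pd]; rw [h.fderiv_eq]

lemma pd_add {f g : V3 → ℂ} {x : V3} (hf : DifferentiableAt ℝ f x)
    (hg : DifferentiableAt ℝ g x) (i : Fin 3) :
    pd i (fun w => f w + g w) x = pd i f x + pd i g x := by
  simp only [pd]; rw [fderiv_fun_add hf hg]; simp

lemma pd_sub {f g : V3 → ℂ} {x : V3} (hf : DifferentiableAt ℝ f x)
    (hg : DifferentiableAt ℝ g x) (i : Fin 3) :
    pd i (fun w => f w - g w) x = pd i f x - pd i g x := by
  simp only [pd]; rw [fderiv_fun_sub hf hg]; simp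

lemma pd_neg {f : V3 → ℂ} {x : V3} (i : Fin 3) :
    pd i (fun w => -f w) x = -pd i f x := by
  simp only [pd]; rw [fderiv_fun_neg]; simp

lemma pd_const_mul {f : V3 → ℂ} {x : V3} (c : ℂ) (hf : DifferentiableAt ℝ f x) (i : Fin 3) :
    pd i (fun w => c * f w) x = c * pd i f x := by
  simp only [pd]; rw [fderiv_const_mul hf c]; simp

lemma coordV (x z : V3) (j : Fin 3) : (x - z) j = x j - z j := rfl

lemma F1_swap (k : ℂ) (x z : V3) (j : Fin 3) : F1 k z j x = -F1 k x j z := by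
  simp only [F1]
  rw [norm_sub_rev]
  have h : ((x - z) j : ℝ) = -((z - x) j) := by rw [coordV, coordV]; ring
  rw [h]
  push_cast
  ring

lemma F2_swap (k : ℂ) (x z : V3) (j l : Fin 3) : F2 k z j l x = F2 k x j l z := by
  simp only [F2]
  rw [norm_sub_rev]
  have hj : ((x - z) j : ℝ) = -((z - x) j) := by rw [coordV, coordV]; ring
  have hl : ((x - z) l : ℝ) = -((z - x) l) := by rw [coordV, coordV]; ring
  rw [hj, hl]
  push_cast
  ring

lemma gammaK_fun_eq (k : ℂ) (z : V3) :
    (fun w : V3 => gammaK k w z) = F0 k z := by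
  funext w; rw [gammaK_eq_phf]; rfl

lemma gammaK_fun_eq' (k : ℂ) (x : V3) :
    (fun z : V3 => gammaK k x z) = F0 k x := by
  funext z; rw [gammaK_eq_phf, norm_sub_rev]; rfl

/-- `pd j` of the difference of two Helmholtz kernels, in the first variable. -/
lemma pd_gamma_diff (k1 k2 : ℂ) (z : V3) {x' : V3} (hxz : x' ≠ z) (j : Fin 3) :
    pd j (fun w => gammaK k1 w z - gammaK k2 w z) x' = F1 k1 z j x' - F1 k2 z j x' := by
  have heq : (fun w : V3 => gammaK k1 w z - gammaK k2 w z)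
      = fun w => F0 k1 z w - F0 k2 z w := by
    funext w; rw [gammaK_eq_phf, gammaK_eq_phf]; rfl
  rw [heq]
  rw [pd_sub (hF0 k1 z hxz).differentiableAt (hF0 k2 z hxz).differentiableAt j]
  rw [pdF0 k1 z hxz j, pdF0 k2 z hxz j]

/-- The inner `z`-function is eventually (near `y`) an explicit combination of `F1`s. -/
lemma ev_inner (k1 k2 : ℂ) (x' y : V3) (hx'y : x' ≠ y) (j : Fin 3) :
    (fun z => pd j (fun w => gammaK k1 w z - gammaK k2 w z) x')
      =ᶠ[nhds y] (fun z => -F1 k1 x' j z + F1 k2 x' j z) := by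
  filter_upwards [eventually_ne_nhds (Ne.symm hx'y)] with z hz
  rw [pd_gamma_diff k1 k2 z (fun h => hz (h ▸ rfl)) j]
  rw [F1_swap k1 x' z j, F1_swap k2 x' z j]
  ring

lemma pd_inner_z (k1 k2 : ℂ) (x' y : V3) (hx'y : x' ≠ y) (j l : Fin 3) :
    pd l (fun z => pd j (fun w => gammaK k1 w z - gammaK k2 w z) x') y
      = -(F2 k1 y l j x' - F2 k2 y l j x') := by
  rw [pd_congr_nhds (ev_inner k1 k2 x' y hx'y j) l]
  have hyx' : y ≠ x' := Ne.symm hx'y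
  have h1 := (hF1 k1 x' j hyx').differentiableAt
  have h2 := (hF1 k2 x' j hyx').differentiableAt
  rw [pd_add (f := fun z => -F1 k1 x' j z) h1.neg h2 l]
  rw [pd_neg l]
  rw [pdF1 k1 x' j hyx' l, pdF1 k2 x' j hyx' l]
  rw [F2_swap k1 x' y l j, F2_swap k2 x' y l j]
  ring

def Ufun (k1 k2 : ℂ) (νy : Fin 3 → ℝ) (y : V3) (j : Fin 3) (x' : V3) : ℂ :=
  ∑ l, (νy l : ℂ) * (F2 k1 y l j x' - F2 k2 y l j x')

def DF2 (k : ℂ) (z : V3) (j l : Fin 3) (x : V3) : V3 →L[ℝ] ℂ :=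
  (chf k ‖x - z‖ * (((x - z) j : ℝ) : ℂ)) • prC l
    + (chf k ‖x - z‖ * (((x - z) l : ℝ) : ℂ)) • prC j
    + (xif k ‖x - z‖ * (((x - z) j : ℝ) : ℂ) * (((x - z) l : ℝ) : ℂ)
        + (if j = l then chf k ‖x - z‖ else 0)) • inC (x - z)

lemma hF2' (k : ℂ) (z : V3) (j l : Fin 3) {x : V3} (hxz : x ≠ z) :
    HasFDerivAt (F2 k z j l) (DF2 k z j l x) x := hF2 k z j l hxz

lemma hUfun (k1 k2 : ℂ) (νy : Fin 3 → ℝ) {y x : V3} (hxy : x ≠ y) (j : Fin 3) :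
    HasFDerivAt (Ufun k1 k2 νy y j)
      (∑ l, (νy l : ℂ) • (DF2 k1 y l j x - DF2 k2 y l j x)) x := by
  apply HasFDerivAt.fun_sum
  intro l _
  exact ((hF2' k1 y l j hxy).sub (hF2' k2 y l j hxy)).const_mul ((νy l : ℂ))

lemma pdU (k1 k2 : ℂ) (νy : Fin 3 → ℝ) {y x : V3} (hxy : x ≠ y) (m j : Fin 3) :
    pd m (Ufun k1 k2 νy y j) x
      = ∑ l, (νy l : ℂ) * (pd m (F2 k1 y l j) x - pd m (F2 k2 y l j) x) := by
  rw [pd_of_hasFDerivAt (hUfun k1 k2 νy hxy j) m]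
  rw [ContinuousLinearMap.sum_apply]
  refine Finset.sum_congr rfl fun l _ => ?_
  rw [pd_of_hasFDerivAt (hF2' k1 y l j hxy) m, pd_of_hasFDerivAt (hF2' k2 y l j hxy) m]
  simp [smul_eq_mul]

/-- Explicit value of `pd m (Ufun ... j)`. -/
lemma pdU' (k1 k2 : ℂ) (νy : Fin 3 → ℝ) {y x : V3} (hxy : x ≠ y) (m j : Fin 3) :
    pd m (Ufun k1 k2 νy y j) x
      = ∑ l, (νy l : ℂ) *
          ((xif k1 ‖x - y‖ * (((x - y) m : ℝ) : ℂ) * (((x - y) l : ℝ) : ℂ) * (((x - y) j : ℝ) : ℂ)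
              + chf k1 ‖x - y‖ *
                ((if m = l then (((x - y) j : ℝ) : ℂ) else 0)
                  + (if m = j then (((x - y) l : ℝ) : ℂ) else 0)
                  + (if l = j then (((x - y) m : ℝ) : ℂ) else 0)))
            - (xif k2 ‖x - y‖ * (((x - y) m : ℝ) : ℂ) * (((x - y) l : ℝ) : ℂ) * (((x - y) j : ℝ) : ℂ)
              + chf k2 ‖x - y‖ *
                ((if m = l then (((x - y) j : ℝ) : ℂ) else 0)
                  + (if m = j then (((x - y) l : ℝ) : ℂ) else 0)
                  + (if l = j then (((x - y) m : ℝ) : ℂ) else 0)))) := by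
  rw [pdU k1 k2 νy hxy m j]
  refine Finset.sum_congr rfl fun l _ => ?_
  rw [pdF2 k1 y l j hxy m, pdF2 k2 y l j hxy m]

lemma norm_sq_coords {x y : V3} :
    ((‖x - y‖ : ℝ) : ℂ)^2
      = (((x - y) 0 : ℝ) : ℂ)^2 + (((x - y) 1 : ℝ) : ℂ)^2 + (((x - y) 2 : ℝ) : ℂ)^2 := by
  have h : ‖x - y‖^2 = ((x - y) 0)^2 + ((x - y) 1)^2 + ((x - y) 2)^2 := by
    rw [EuclideanSpace.norm_eq]
    rw [Real.sq_sqrt (by positivity)]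
    simp [Fin.sum_univ_three, sq_abs]
  calc ((‖x - y‖ : ℝ) : ℂ)^2 = ((‖x - y‖^2 : ℝ) : ℂ) := by push_cast; ring
    _ = _ := by rw [h]; push_cast; ring


lemma coord_sub_C (x y : V3) (l : Fin 3) :
    (((x - y) l : ℝ) : ℂ) = ((x l : ℝ) : ℂ) - ((y l : ℝ) : ℂ) := by
  rw [coordV]; push_cast; ring

lemma fin01 : (((0:Fin 3) = 1)) = False := by decide
lemma fin02 : (((0:Fin 3) = 2)) = False := by decide
lemma fin10 : (((1:Fin 3) = 0)) = False := by decide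
lemma fin12 : (((1:Fin 3) = 2)) = False := by decide
lemma fin20 : (((2:Fin 3) = 0)) = False := by decide
lemma fin21 : (((2:Fin 3) = 1)) = False := by decide

set_option maxHeartbeats 2000000 in
/-- Divergence-type contraction of `Ufun` (uses the Helmholtz relation). -/
lemma divU (k1 k2 : ℂ) (νy : Fin 3 → ℝ) {y x : V3} (hxy : x ≠ y) :
    ∑ j, pd j (Ufun k1 k2 νy y j) x
      = (-(k1^2) * psf k1 ‖x - y‖ + k2^2 * psf k2 ‖x - y‖)
          * ∑ l, (νy l : ℂ) * (((x - y) l : ℝ) : ℂ) := by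
  have htnz : ‖x - y‖ ≠ 0 := norm_ne_zero_iff.mpr (sub_ne_zero.mpr hxy)
  have h1 := H3f k1 htnz
  have h2 := H3f k2 htnz
  have hQ := norm_sq_coords (x := x) (y := y)
  simp only [coordV] at hQ
  push_cast at hQ
  simp only [pdU' k1 k2 νy hxy, Fin.sum_univ_three, fin01, fin02, fin10, fin12,
    fin20, fin21, eq_self_iff_true, if_true, if_false, coordV]
  push_cast
  linear_combination
    ((νy 0 : ℂ) * (((x 0 : ℝ) : ℂ) - ((y 0 : ℝ) : ℂ))
      + (νy 1 : ℂ) * (((x 1 : ℝ) : ℂ) - ((y 1 : ℝ) : ℂ))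
      + (νy 2 : ℂ) * (((x 2 : ℝ) : ℂ) - ((y 2 : ℝ) : ℂ))) * h1
    - ((νy 0 : ℂ) * (((x 0 : ℝ) : ℂ) - ((y 0 : ℝ) : ℂ))
      + (νy 1 : ℂ) * (((x 1 : ℝ) : ℂ) - ((y 1 : ℝ) : ℂ))
      + (νy 2 : ℂ) * (((x 2 : ℝ) : ℂ) - ((y 2 : ℝ) : ℂ))) * h2
    - (xif k1 ‖x - y‖ - xif k2 ‖x - y‖)
      * ((νy 0 : ℂ) * (((x 0 : ℝ) : ℂ) - ((y 0 : ℝ) : ℂ))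
        + (νy 1 : ℂ) * (((x 1 : ℝ) : ℂ) - ((y 1 : ℝ) : ℂ))
        + (νy 2 : ℂ) * (((x 2 : ℝ) : ℂ) - ((y 2 : ℝ) : ℂ))) * hQ


lemma eq_if_comm (p q : Fin 3) (a : ℂ) :
    (if p = q then a else 0) = (if q = p then a else 0) := by
  by_cases h : p = q
  · simp [h]
  · simp [h, Ne.symm h]

/-- `pd m (Ufun j)` is symmetric in `(m, j)`. -/
lemma pdU_symm (k1 k2 : ℂ) (νy : Fin 3 → ℝ) {y x : V3} (hxy : x ≠ y) (m j : Fin 3) :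
    pd m (Ufun k1 k2 νy y j) x = pd j (Ufun k1 k2 νy y m) x := by
  rw [pdU' k1 k2 νy hxy m j, pdU' k1 k2 νy hxy j m]
  refine Finset.sum_congr rfl fun l _ => ?_
  rw [eq_if_comm j l, eq_if_comm j m, eq_if_comm l m]
  ring

/-- Symmetry contraction. -/
lemma symU (k1 k2 : ℂ) (νx νy : Fin 3 → ℝ) {y x : V3} (hxy : x ≠ y) (i : Fin 3) :
    ∑ j, (νx j : ℂ) * pd j (Ufun k1 k2 νy y i) x
      = ∑ j, (νx j : ℂ) * pd i (Ufun k1 k2 νy y j) x :=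
  Finset.sum_congr rfl fun j _ => by rw [pdU_symm k1 k2 νy hxy j i]

lemma eps_swap (m a b : Fin 3) : eps m a b = -eps m b a := by
  fin_cases m <;> fin_cases a <;> fin_cases b <;> norm_num [eps, Prod.ext_iff, Fin.ext_iff]

/-- Curl contraction vanishes. -/
lemma curlU (k1 k2 : ℂ) (νy : Fin 3 → ℝ) {y x : V3} (hxy : x ≠ y) (m : Fin 3) :
    ∑ a, ∑ b, ((eps m a b : ℝ) : ℂ) * pd a (Ufun k1 k2 νy y b) x = 0 := by
  have hs : ∑ a, ∑ b, ((eps m a b : ℝ) : ℂ) * pd a (Ufun k1 k2 νy y b) x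
      = -∑ a, ∑ b, ((eps m a b : ℝ) : ℂ) * pd a (Ufun k1 k2 νy y b) x := by
    conv_lhs => rw [Finset.sum_comm]
    rw [← Finset.sum_neg_distrib]
    refine Finset.sum_congr rfl fun a _ => ?_
    rw [← Finset.sum_neg_distrib]
    refine Finset.sum_congr rfl fun b _ => ?_
    rw [eps_swap m b a, pdU_symm k1 k2 νy hxy b a]
    push_cast
    ring
  linear_combination hs / 2

end Aux3

section Aux4
open Complex

lemma pd_F1comb (k1 k2 : ℂ) {x' y : V3} (hx'y : x' ≠ y) (j l : Fin 3) :
    pd l (fun z => -F1 k1 x' j z + F1 k2 x' j z) y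
      = -(F2 k1 y l j x' - F2 k2 y l j x') := by
  have hyx' : y ≠ x' := Ne.symm hx'y
  have h1 := (hF1 k1 x' j hyx').differentiableAt
  have h2 := (hF1 k2 x' j hyx').differentiableAt
  rw [pd_add (f := fun z => -F1 k1 x' j z) h1.neg h2 l, pd_neg l, pdF1 k1 x' j hyx' l, pdF1 k2 x' j hyx' l,
    F2_swap k1 x' y l j, F2_swap k2 x' y l j]
  ring

lemma pdz_E12 (lam μ gam : ℝ) (k1 k2 : ℂ) {x' y : V3} (hx'y : x' ≠ y) (j l : Fin 3) :
    pd l (fun z => E12 lam μ gam k1 k2 j x' z) y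
      = ((gam : ℂ) / ((k1^2 - k2^2) * ((lam:ℂ) + 2*(μ:ℂ))))
          * (F2 k1 y l j x' - F2 k2 y l j x') := by
  have hev2 : (fun z => E12 lam μ gam k1 k2 j x' z)
      =ᶠ[nhds y] (fun z => -((gam:ℂ) / ((k1^2-k2^2)*((lam:ℂ)+2*(μ:ℂ))))
          * (-F1 k1 x' j z + F1 k2 x' j z)) := by
    filter_upwards [ev_inner k1 k2 x' y hx'y j] with z hz
    simp only [E12]
    rw [hz]
  rw [pd_congr_nhds hev2 l]
  have hyx' : y ≠ x' := Ne.symm hx'y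
  have hdiff : DifferentiableAt ℝ (fun z => -F1 k1 x' j z + F1 k2 x' j z) y :=
    (hF1 k1 x' j hyx').differentiableAt.neg.add (hF1 k2 x' j hyx').differentiableAt
  rw [pd_const_mul _ hdiff l, pd_F1comb k1 k2 hx'y j l]
  ring

lemma hpdVU (lam μ gam : ℝ) (k1 k2 : ℂ) (νy : Fin 3 → ℝ) {y x : V3} (hxy : x ≠ y)
    (m j : Fin 3) :
    pd m (fun x' => ∑ l, ((νy l : ℝ) : ℂ) * pd l (fun z => E12 lam μ gam k1 k2 j x' z) y) x
      = ((gam:ℂ)/((k1^2-k2^2)*((lam:ℂ)+2*(μ:ℂ)))) * pd m (Ufun k1 k2 νy y j) x := by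
  have hev : (fun x' => ∑ l, ((νy l : ℝ) : ℂ) * pd l (fun z => E12 lam μ gam k1 k2 j x' z) y)
      =ᶠ[nhds x] (fun x' => ((gam:ℂ)/((k1^2-k2^2)*((lam:ℂ)+2*(μ:ℂ))))
          * Ufun k1 k2 νy y j x') := by
    filter_upwards [eventually_ne_nhds hxy] with x' hx'
    rw [Ufun, Finset.mul_sum]
    refine Finset.sum_congr rfl fun l _ => ?_
    rw [pdz_E12 lam μ gam k1 k2 hx' j l]
    ring
  rw [pd_congr_nhds hev m,
    pd_const_mul _ (hUfun k1 k2 νy hxy j).differentiableAt m]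

lemma hpdWU (k1 k2 : ℂ) (νy : Fin 3 → ℝ) {y x : V3} (hxy : x ≠ y) (m j : Fin 3) :
    pd m (fun x' => ∑ l, ((νy l : ℝ) : ℂ) *
        pd l (fun z => pd j (fun w => gammaK k1 w z - gammaK k2 w z) x') y) x
      = -pd m (Ufun k1 k2 νy y j) x := by
  have hev : (fun x' => ∑ l, ((νy l : ℝ) : ℂ) *
        pd l (fun z => pd j (fun w => gammaK k1 w z - gammaK k2 w z) x') y)
      =ᶠ[nhds x] (fun x' => -Ufun k1 k2 νy y j x') := by
    filter_upwards [eventually_ne_nhds hxy] with x' hx'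
    rw [Ufun, ← Finset.sum_neg_distrib]
    refine Finset.sum_congr rfl fun l _ => ?_
    rw [pd_inner_z k1 k2 x' y hx' j l]
    ring
  rw [pd_congr_nhds hev m, pd_neg m]

lemma hpdE22 (kp k1 k2 : ℂ) {x y : V3} (hxy : x ≠ y) (l : Fin 3) :
    pd l (fun z => E22 kp k1 k2 x z) y
      = (1/(k1^2-k2^2)) * ((kp^2-k1^2) * psf k1 ‖x - y‖ - (kp^2-k2^2) * psf k2 ‖x - y‖)
          * (((x - y) l : ℝ) : ℂ) := by
  have heq : (fun z => E22 kp k1 k2 x z)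
      = fun z => -(1/(k1^2-k2^2)) * ((kp^2-k1^2) * F0 k1 x z - (kp^2-k2^2) * F0 k2 x z) := by
    funext z
    rw [E22, gammaK_eq_phf, gammaK_eq_phf, norm_sub_rev]
    rfl
  rw [heq]
  have hyx : y ≠ x := Ne.symm hxy
  have d1 := (hF0 k1 x hyx).differentiableAt
  have d2 := (hF0 k2 x hyx).differentiableAt
  rw [pd_const_mul (f := fun z => (kp^2-k1^2) * F0 k1 x z - (kp^2-k2^2) * F0 k2 x z) _ ((d1.const_mul _).sub (d2.const_mul _)) l,
    pd_sub (d1.const_mul _) (d2.const_mul _) l,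
    pd_const_mul _ d1 l, pd_const_mul _ d2 l,
    pdF0 k1 x hyx l, pdF0 k2 x hyx l,
    F1_swap k1 y x l, F1_swap k2 y x l]
  simp only [F1]
  ring

lemma hpdG (k1 k2 : ℂ) {x y : V3} (hxy : x ≠ y) (l : Fin 3) :
    pd l (fun z => gammaK k1 x z - gammaK k2 x z) y
      = -(psf k1 ‖x - y‖ - psf k2 ‖x - y‖) * (((x - y) l : ℝ) : ℂ) := by
  have heq : (fun z => gammaK k1 x z - gammaK k2 x z)
      = fun z => F0 k1 x z - F0 k2 x z := by
    funext z
    rw [gammaK_eq_phf, gammaK_eq_phf, norm_sub_rev]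
    rfl
  rw [heq]
  have hyx : y ≠ x := Ne.symm hxy
  have d1 := (hF0 k1 x hyx).differentiableAt
  have d2 := (hF0 k2 x hyx).differentiableAt
  rw [pd_sub d1 d2 l, pdF0 k1 x hyx l, pdF0 k2 x hyx l,
    F1_swap k1 y x l, F1_swap k2 y x l]
  simp only [F1]
  ring

end Aux4
/-- Regularized expression for
`T(∂_x,ν_x)[(ν_y·∇_y)E₁₂] − γ ν_x (ν_y·∇_y)E₂₂`, componentwise. -/
theorem stmt_15 (lam μ gam : ℝ) (hμ : 0 < μ) (hlam : 0 < lam + 2 * μ)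
    (kp k1 k2 : ℂ) (hne : k1 ^ 2 ≠ k2 ^ 2) (νx νy : Fin 3 → ℝ)
    (y x : V3) (hxy : x ≠ y) (i : Fin 3) :
    traction lam μ νx
        (fun j => fun x' => dirD νy (fun z => E12 lam μ gam k1 k2 j x' z) y) i x
      - (gam : ℂ) * (νx i : ℂ) * dirD νy (fun z => E22 kp k1 k2 x z) y
      = ((gam : ℂ) * kp ^ 2 / (k1 ^ 2 - k2 ^ 2)) * (νx i : ℂ) *
          dirD νy (fun z => gammaK k1 x z - gammaK k2 x z) y
        - (2 * (μ : ℂ) * (gam : ℂ) /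
            ((k1 ^ 2 - k2 ^ 2) * ((lam : ℂ) + 2 * (μ : ℂ)))) *
          gunterM νx (fun j => fun x' => dirD νy
            (fun z => pd j (fun w => gammaK k1 w z - gammaK k2 w z) x') y) i x := by
  have hD : (k1^2 - k2^2) ≠ 0 := sub_ne_zero.mpr hne
  have hLM : ((lam:ℂ) + 2*(μ:ℂ)) ≠ 0 := by
    have h0 : ((lam + 2*μ : ℝ) : ℂ) ≠ 0 := by exact_mod_cast (ne_of_gt hlam)
    push_cast at h0
    exact h0
  simp only [traction, dirD, vdiv, curl, crossR, gunterM]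
  simp only [hpdVU lam μ gam k1 k2 νy hxy, hpdWU k1 k2 νy hxy,
    hpdE22 kp k1 k2 hxy, hpdG k1 k2 hxy]
  have e1 : ∑ j : Fin 3, ((νx j : ℝ) : ℂ) *
        ((gam:ℂ) / ((k1^2 - k2^2) * ((lam:ℂ) + 2*(μ:ℂ))) * pd j (Ufun k1 k2 νy y i) x)
      = (gam:ℂ) / ((k1^2 - k2^2) * ((lam:ℂ) + 2*(μ:ℂ)))
          * ∑ j : Fin 3, ((νx j : ℝ) : ℂ) * pd i (Ufun k1 k2 νy y j) x := by
    rw [← symU k1 k2 νx νy hxy i, Finset.mul_sum]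
    exact Finset.sum_congr rfl fun j _ => by ring
  have e2 : ∑ j : Fin 3, ((gam:ℂ) / ((k1^2 - k2^2) * ((lam:ℂ) + 2*(μ:ℂ)))
        * pd j (Ufun k1 k2 νy y j) x)
      = (gam:ℂ) / ((k1^2 - k2^2) * ((lam:ℂ) + 2*(μ:ℂ)))
          * ((-(k1^2) * psf k1 ‖x - y‖ + k2^2 * psf k2 ‖x - y‖)
              * ∑ l : Fin 3, ((νy l : ℝ) : ℂ) * (((x - y) l : ℝ) : ℂ)) := by
    rw [← Finset.mul_sum, divU k1 k2 νy hxy]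
  have e3 : ∀ m : Fin 3, ∑ a : Fin 3, ∑ b : Fin 3, ((eps m a b : ℝ) : ℂ) *
        ((gam:ℂ) / ((k1^2 - k2^2) * ((lam:ℂ) + 2*(μ:ℂ))) * pd a (Ufun k1 k2 νy y b) x) = 0 := by
    intro m
    have h := curlU k1 k2 νy hxy m
    calc ∑ a : Fin 3, ∑ b : Fin 3, ((eps m a b : ℝ) : ℂ) *
          ((gam:ℂ) / ((k1^2 - k2^2) * ((lam:ℂ) + 2*(μ:ℂ))) * pd a (Ufun k1 k2 νy y b) x)
        = (gam:ℂ) / ((k1^2 - k2^2) * ((lam:ℂ) + 2*(μ:ℂ)))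
            * ∑ a : Fin 3, ∑ b : Fin 3, ((eps m a b : ℝ) : ℂ) * pd a (Ufun k1 k2 νy y b) x := by
          rw [Finset.mul_sum]
          refine Finset.sum_congr rfl fun a _ => ?_
          rw [Finset.mul_sum]
          exact Finset.sum_congr rfl fun b _ => by ring
      _ = 0 := by rw [h, mul_zero]
  have e4 : ∑ l : Fin 3, ((νy l : ℝ) : ℂ) *
        (1/(k1^2 - k2^2) * ((kp^2 - k1^2) * psf k1 ‖x - y‖ - (kp^2 - k2^2) * psf k2 ‖x - y‖)
          * (((x - y) l : ℝ) : ℂ))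
      = 1/(k1^2 - k2^2) * ((kp^2 - k1^2) * psf k1 ‖x - y‖ - (kp^2 - k2^2) * psf k2 ‖x - y‖)
          * ∑ l : Fin 3, ((νy l : ℝ) : ℂ) * (((x - y) l : ℝ) : ℂ) := by
    rw [Finset.mul_sum]
    exact Finset.sum_congr rfl fun l _ => by ring
  have e5 : ∑ l : Fin 3, ((νy l : ℝ) : ℂ) *
        (-(psf k1 ‖x - y‖ - psf k2 ‖x - y‖) * (((x - y) l : ℝ) : ℂ))
      = -(psf k1 ‖x - y‖ - psf k2 ‖x - y‖)
          * ∑ l : Fin 3, ((νy l : ℝ) : ℂ) * (((x - y) l : ℝ) : ℂ) := by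
    rw [Finset.mul_sum]
    exact Finset.sum_congr rfl fun l _ => by ring
  have e6 : ∑ j : Fin 3, (((νx j : ℝ) : ℂ) * -pd i (Ufun k1 k2 νy y j) x
        - ((νx i : ℝ) : ℂ) * -pd j (Ufun k1 k2 νy y j) x)
      = -(∑ j : Fin 3, ((νx j : ℝ) : ℂ) * pd i (Ufun k1 k2 νy y j) x)
          + ((νx i : ℝ) : ℂ) * ((-(k1^2) * psf k1 ‖x - y‖ + k2^2 * psf k2 ‖x - y‖)
              * ∑ l : Fin 3, ((νy l : ℝ) : ℂ) * (((x - y) l : ℝ) : ℂ)) := by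
    have h61 : ∑ j : Fin 3, ((νx j : ℝ) : ℂ) * -pd i (Ufun k1 k2 νy y j) x
        = -(∑ j : Fin 3, ((νx j : ℝ) : ℂ) * pd i (Ufun k1 k2 νy y j) x) := by
      rw [← Finset.sum_neg_distrib]
      exact Finset.sum_congr rfl fun j _ => by ring
    have h62 : ∑ j : Fin 3, ((νx i : ℝ) : ℂ) * -pd j (Ufun k1 k2 νy y j) x
        = -(((νx i : ℝ) : ℂ) * ∑ j : Fin 3, pd j (Ufun k1 k2 νy y j) x) := by
      rw [Finset.mul_sum, ← Finset.sum_neg_distrib]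
      exact Finset.sum_congr rfl fun j _ => by ring
    rw [Finset.sum_sub_distrib, h61, h62, divU k1 k2 νy hxy]
    ring
  rw [e1, e2, e4, e5, e6]
  simp only [e3, mul_zero, Finset.sum_const_zero]
  field_simp
  ring
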